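/- Let f : ℂⁿ → ℂ be a holomorphic weighted homogeneous polynomial: there are positive integers p₁,…,pₙ and a positive integer d with f(r^{p₁}z₁,…,r^{pₙ}zₙ) = r^d f(z) for all r > 0 and z ∈ ℂⁿ. Assume that for every nonempty I ⊆ {1,…,n} there is no point z with z_j ≠ 0 for j ∈ I, z_j = 0 for j ∉ I, and (∂f/∂z_j)(z) = 0 for all j ∈ I. Let a > b ≥ 1 be integers, φ_{a,b}(w) = (w₁^a conj(w₁)^b, …, wₙ^a conj(wₙ)^b), and g = f ∘ φ_{a,b}. Then C(w) = Σ_{1≤j<k≤n} C_{j,k}(w) > 0 for every w ≠ 0 with g(w) = 0, where C_{j,k}(w) = |conj(w_j) g_{w_k}(w) − conj(w_k) g_{w_j}(w)|² − |w_j g_{w̄_k}(w) − w_k g_{w̄_j}(w)|²; i.e., g is strictly holomorphic-like on all of ℂⁿ. -/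

import Mathlib

open Complex ComplexConjugate

/-- The Wirtinger derivative `∂g/∂w_j` of a real-differentiable map `g : ℂⁿ → ℂ`. -/
noncomputable def wdz {n : ℕ} (g : (Fin n → ℂ) → ℂ) (z : Fin n → ℂ) (j : Fin n) : ℂ :=
  (1 / 2 : ℂ) * (fderiv ℝ g z (Pi.single j 1) - Complex.I * fderiv ℝ g z (Pi.single j Complex.I))

/-- The Wirtinger derivative `∂g/∂w̄_j` of a real-differentiable map `g : ℂⁿ → ℂ`. -/
noncomputable def wdzbar {n : ℕ} (g : (Fin n → ℂ) → ℂ) (z : Fin n → ℂ) (j : Fin n) : ℂ :=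
  (1 / 2 : ℂ) * (fderiv ℝ g z (Pi.single j 1) + Complex.I * fderiv ℝ g z (Pi.single j Complex.I))

/-- The homogeneous mixed covering `φ_{a,b}(w) = (w₁^a conj(w₁)^b, …, wₙ^a conj(wₙ)^b)`. -/
noncomputable def phiab {n : ℕ} (a b : ℕ) (w : Fin n → ℂ) : Fin n → ℂ :=
  fun j => w j ^ a * conj (w j) ^ b

/-- The quantity `C_{j,k}` of a real-differentiable mixed function `g`. -/
noncomputable def Cjk {n : ℕ} (g : (Fin n → ℂ) → ℂ) (w : Fin n → ℂ) (j k : Fin n) : ℝ :=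
  ‖conj (w j) * wdz g w k - conj (w k) * wdz g w j‖ ^ 2
    - ‖w j * wdzbar g w k - w k * wdzbar g w j‖ ^ 2

/-!
Write `F_j = (∂f/∂z_j)(φ(w))` and `G_j = w_j^(a-1) w̄_j^(b-1) F_j`. The chain rule gives
`g_{w_j} = a w̄_j G_j` and `g_{w̄_j} = b w_j G_j`, hence `C_{j,k}(w) = (a² - b²) |w_j w_k (G_k - G_j)|²`,
which is `≥ 0` since `a > b`. If all of these vanished, `G` would be constant on the support of `w`,
and Euler's identity `Σ p_j z_j F_j = d f(z) = 0` at `z = φ(w)`, where `z_j F_j = |w_j|² G_j`, would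
force that constant to be `0`; then `F_j = 0` for every `j` in the support of `w`, a critical point of
`f` on a coordinate torus.
-/

theorem ContinuousLinearMap.apply_eq_sum_smul_single {ι R M : Type*} [Fintype ι] [DecidableEq ι]
    [Semiring R] [TopologicalSpace R] [AddCommMonoid M] [Module R M] [TopologicalSpace M]
    (L : (ι → R) →L[R] M) (x : ι → R) : L x = ∑ j, x j • L (Pi.single j 1) := by
  conv_lhs => rw [pi_eq_sum_univ' x]
  simp only [map_sum, map_smul]

theorem sum_weight_mul_fderiv_single_eq {ι : Type*} [Fintype ι] [DecidableEq ι] {f : (ι → ℂ) → ℂ}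
    {z : ι → ℂ} (hf : DifferentiableAt ℂ f z) (p : ι → ℕ) (d : ℕ)
    (hhom : ∀ r : ℝ, 0 < r → f (fun j => ((r ^ p j : ℝ) : ℂ) * z j) = ((r ^ d : ℝ) : ℂ) * f z) :
    ∑ j, (p j : ℂ) * z j * fderiv ℂ f z (Pi.single j 1) = d * f z := by
  have hpow (m : ℕ) : HasDerivAt (fun r : ℝ => (r : ℂ) ^ m) m 1 := by
    simpa using (hasDerivAt_pow m ((1 : ℝ) : ℂ)).comp_ofReal
  have hcurve : HasDerivAt (fun r : ℝ => fun j => (r : ℂ) ^ p j * z j)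
      (fun j => (p j : ℂ) * z j) 1 :=
    hasDerivAt_pi.mpr fun j => by simpa using (hpow (p j)).mul_const (z j)
  have hchain : HasDerivAt (fun r : ℝ => f (fun j => (r : ℂ) ^ p j * z j))
      (fderiv ℂ f z fun j => (p j : ℂ) * z j) 1 := by
    have hf' : HasFDerivAt f ((fderiv ℂ f z).restrictScalars ℝ)
        (fun j => ((1 : ℝ) : ℂ) ^ p j * z j) := by
      simpa using hf.hasFDerivAt.restrictScalars ℝ
    exact hf'.comp_hasDerivAt (1 : ℝ) hcurve
  have hscale : HasDerivAt (fun r : ℝ => f (fun j => (r : ℂ) ^ p j * z j)) (d * f z) 1 := by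
    refine (by simpa using (hpow d).mul_const (f z) :
      HasDerivAt (fun r : ℝ => (r : ℂ) ^ d * f z) (d * f z) 1).congr_of_eventuallyEq ?_
    filter_upwards [eventually_gt_nhds one_pos] with r hr
    simpa using hhom r hr
  rw [hscale.unique hchain, ContinuousLinearMap.apply_eq_sum_smul_single]
  simp only [smul_eq_mul]

theorem eq_zero_of_weighted_sum_eq_zero {ι : Type*} [Fintype ι] {p : ι → ℕ} (hp : ∀ j, 0 < p j)
    {w G : ι → ℂ} (hG : ∀ j k, w j * w k * (G k - G j) = 0)
    (hsum : ∑ k, (p k : ℂ) * ‖w k‖ ^ 2 * G k = 0) {j : ι} (hj : w j ≠ 0) : G j = 0 := by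
  have hconst (k : ι) : (p k : ℂ) * ‖w k‖ ^ 2 * G k = (p k : ℂ) * ‖w k‖ ^ 2 * G j := by
    have hk : w k * (G k - G j) = 0 := by
      simpa [mul_assoc, hj] using hG j k
    rw [← mul_conj']
    linear_combination (p k * conj (w k)) * hk
  have hpos : 0 < ∑ k, (p k : ℝ) * ‖w k‖ ^ 2 :=
    Finset.sum_pos' (fun k _ => by positivity)
      ⟨j, Finset.mem_univ j, by have := hp j; positivity⟩
  simp only [hconst, ← Finset.sum_mul] at hsum
  exact (mul_eq_zero.mp hsum).resolve_left (by exact_mod_cast hpos.ne')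

theorem exists_ne_zero_and_fderiv_single_ne_zero {ι : Type*} [Fintype ι] [DecidableEq ι]
    {f : (ι → ℂ) → ℂ}
    (hcrit : ∀ I : Finset ι, I.Nonempty →
      ¬∃ z : ι → ℂ, (∀ j ∈ I, z j ≠ 0) ∧ (∀ j ∉ I, z j = 0) ∧
        (∀ j ∈ I, fderiv ℂ f z (Pi.single j 1) = 0))
    {z : ι → ℂ} (hz : z ≠ 0) : ∃ j, z j ≠ 0 ∧ fderiv ℂ f z (Pi.single j 1) ≠ 0 := by
  by_contra! hF
  obtain ⟨j, hj⟩ := Function.ne_iff.mp hz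
  exact hcrit {j | z j ≠ 0} ⟨j, by simpa using hj⟩ ⟨z, by simp, by simp, by simpa using hF⟩

section Wirtinger

variable {n : ℕ} {g : (Fin n → ℂ) → ℂ} {w : Fin n → ℂ}

theorem wdz_eq_of_fderiv_single {j : Fin n} {A B : ℂ}
    (h : ∀ c, fderiv ℝ g w (Pi.single j c) = A * c + B * conj c) : wdz g w j = A := by
  rw [wdz, h, h, map_one, conj_I]
  linear_combination (-(1 / 2 : ℂ) * (A - B)) * I_sq

theorem wdzbar_eq_of_fderiv_single {j : Fin n} {A B : ℂ}
    (h : ∀ c, fderiv ℝ g w (Pi.single j c) = A * c + B * conj c) : wdzbar g w j = B := by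
  rw [wdzbar, h, h, map_one, conj_I]
  linear_combination ((1 / 2 : ℂ) * (A - B)) * I_sq

theorem Cjk_eq_of_wdz_of_wdzbar {α β : ℂ} {G : Fin n → ℂ}
    (hz : ∀ j, wdz g w j = α * conj (w j) * G j) (hzbar : ∀ j, wdzbar g w j = β * w j * G j)
    (j k : Fin n) :
    Cjk g w j k = (‖α‖ ^ 2 - ‖β‖ ^ 2) * ‖w j * w k * (G k - G j)‖ ^ 2 := by
  have hholo : conj (w j) * wdz g w k - conj (w k) * wdz g w j
      = α * conj (w j) * conj (w k) * (G k - G j) := by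
    rw [hz, hz]; ring
  have hanti : w j * wdzbar g w k - w k * wdzbar g w j = β * w j * w k * (G k - G j) := by
    rw [hzbar, hzbar]; ring
  rw [Cjk, hholo, hanti]
  simp only [norm_mul, norm_conj]
  ring

end Wirtinger

noncomputable def powMulConjPowDeriv (a b : ℕ) (u : ℂ) : ℂ →L[ℝ] ℂ :=
  (a * u ^ (a - 1) * conj u ^ b) • ContinuousLinearMap.id ℝ ℂ
    + (b * u ^ a * conj u ^ (b - 1)) • (conjCLE : ℂ →L[ℝ] ℂ)

theorem hasFDerivAt_pow_mul_conj_pow (a b : ℕ) (u : ℂ) :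
    HasFDerivAt (fun v : ℂ => v ^ a * conj v ^ b) (powMulConjPowDeriv a b u) u := by
  have hpow := (hasDerivAt_pow a u).hasFDerivAt.restrictScalars ℝ
  have hconj_pow := ((hasDerivAt_pow b (conj u)).hasFDerivAt.restrictScalars ℝ).comp u
    (conjCLE : ℂ →L[ℝ] ℂ).hasFDerivAt
  refine (hpow.mul hconj_pow).congr_fderiv (ContinuousLinearMap.ext fun c => ?_)
  simp [powMulConjPowDeriv]
  ring

theorem hasFDerivAt_phiab {n : ℕ} (a b : ℕ) (w : Fin n → ℂ) :
    HasFDerivAt (phiab a b)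
      (ContinuousLinearMap.pi fun k => (powMulConjPowDeriv a b (w k)).comp
        (ContinuousLinearMap.proj k)) w :=
  hasFDerivAt_pi.mpr fun k =>
    (hasFDerivAt_pow_mul_conj_pow a b (w k)).comp (g := fun v : ℂ => v ^ a * conj v ^ b) w
      (hasFDerivAt_apply k w)

theorem fderiv_comp_phiab_single {n : ℕ} {f : (Fin n → ℂ) → ℂ} (a b : ℕ) {w : Fin n → ℂ}
    (hf : DifferentiableAt ℂ f (phiab a b w)) (j : Fin n) (c : ℂ) :
    fderiv ℝ (fun w => f (phiab a b w)) w (Pi.single j c)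
      = (a * w j ^ (a - 1) * conj (w j) ^ b * fderiv ℂ f (phiab a b w) (Pi.single j 1)) * c
        + (b * w j ^ a * conj (w j) ^ (b - 1) * fderiv ℂ f (phiab a b w) (Pi.single j 1))
          * conj c := by
  have hchain : HasFDerivAt (fun w => f (phiab a b w)) _ w :=
    (hf.hasFDerivAt.restrictScalars ℝ).comp w (hasFDerivAt_phiab a b w)
  rw [hchain.fderiv]
  have hsingle : (ContinuousLinearMap.pi fun k => (powMulConjPowDeriv a b (w k)).comp
      (ContinuousLinearMap.proj k)) (Pi.single j c)
      = powMulConjPowDeriv a b (w j) c • Pi.single j 1 := by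
    ext k
    rcases eq_or_ne k j with rfl | hk <;> simp [*]
  simp only [ContinuousLinearMap.comp_apply, hsingle, ContinuousLinearMap.coe_restrictScalars',
    map_smul, smul_eq_mul]
  simp [powMulConjPowDeriv]
  ring

section Pullback

variable {n : ℕ} {f : (Fin n → ℂ) → ℂ} {a b : ℕ} {w : Fin n → ℂ}

theorem phiab_apply_eq_zero_iff (ha : a ≠ 0) (j : Fin n) : phiab a b w j = 0 ↔ w j = 0 := by
  simp only [phiab, mul_eq_zero, pow_eq_zero_iff', map_eq_zero]
  tauto

noncomputable def pullbackGradFactor (f : (Fin n → ℂ) → ℂ) (a b : ℕ) (w : Fin n → ℂ) (j : Fin n) :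
    ℂ :=
  w j ^ (a - 1) * conj (w j) ^ (b - 1) * fderiv ℂ f (phiab a b w) (Pi.single j 1)

theorem wdz_comp_phiab (hb : b ≠ 0) (hf : DifferentiableAt ℂ f (phiab a b w)) (j : Fin n) :
    wdz (fun w => f (phiab a b w)) w j = a * conj (w j) * pullbackGradFactor f a b w j := by
  rw [wdz_eq_of_fderiv_single (fderiv_comp_phiab_single a b hf j), pullbackGradFactor,
    ← mul_pow_sub_one hb (conj (w j))]
  ring

theorem wdzbar_comp_phiab (ha : a ≠ 0) (hf : DifferentiableAt ℂ f (phiab a b w)) (j : Fin n) :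
    wdzbar (fun w => f (phiab a b w)) w j = b * w j * pullbackGradFactor f a b w j := by
  rw [wdzbar_eq_of_fderiv_single (fderiv_comp_phiab_single a b hf j), pullbackGradFactor,
    ← mul_pow_sub_one ha (w j)]
  ring

theorem phiab_mul_fderiv_single (ha : a ≠ 0) (hb : b ≠ 0) (j : Fin n) :
    phiab a b w j * fderiv ℂ f (phiab a b w) (Pi.single j 1)
      = ‖w j‖ ^ 2 * pullbackGradFactor f a b w j := by
  rw [phiab, pullbackGradFactor, ← mul_conj', ← mul_pow_sub_one ha (w j),
    ← mul_pow_sub_one hb (conj (w j))]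
  ring

theorem exists_lt_mul_pullbackGradFactor_sub_ne_zero {p : Fin n → ℕ} (hp : ∀ j, 0 < p j)
    {d : ℕ} (ha : a ≠ 0) (hb : b ≠ 0) (hf : DifferentiableAt ℂ f (phiab a b w))
    (hhom : ∀ r : ℝ, 0 < r →
      f (fun j => ((r ^ p j : ℝ) : ℂ) * phiab a b w j) = ((r ^ d : ℝ) : ℂ) * f (phiab a b w))
    (hzero : f (phiab a b w) = 0)
    (hcrit : ∃ j, phiab a b w j ≠ 0 ∧ fderiv ℂ f (phiab a b w) (Pi.single j 1) ≠ 0) :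
    ∃ j k, j < k ∧
      w j * w k * (pullbackGradFactor f a b w k - pullbackGradFactor f a b w j) ≠ 0 := by
  set G := pullbackGradFactor f a b w
  by_contra! hG
  have hG' (j k : Fin n) : w j * w k * (G k - G j) = 0 := by
    rcases lt_trichotomy j k with h | rfl | h
    · exact hG j k h
    · ring
    · linear_combination -hG k j h
  have hsum : ∑ k, (p k : ℂ) * ‖w k‖ ^ 2 * G k = 0 := by
    simpa [hzero, mul_assoc, phiab_mul_fderiv_single ha hb] using
      sum_weight_mul_fderiv_single_eq hf p d hhom
  obtain ⟨j, hφj, hF⟩ := hcrit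
  have hj : w j ≠ 0 := (phiab_apply_eq_zero_iff ha j).not.1 hφj
  simpa [G, pullbackGradFactor, hj, hF] using eq_zero_of_weighted_sum_eq_zero hp hG' hsum hj

end Pullback

theorem weighted_homogeneous_pullback_strictly_holomorphic_like_general (n : ℕ)
    (f : (Fin n → ℂ) → ℂ) (hf : Differentiable ℂ f)
    (p : Fin n → ℕ) (hp : ∀ j, 0 < p j) (d : ℕ)
    (hhom : ∀ r : ℝ, 0 < r → ∀ z : Fin n → ℂ,
      f (fun j => ((r ^ (p j) : ℝ) : ℂ) * z j) = ((r ^ d : ℝ) : ℂ) * f z)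
    (hcrit : ∀ I : Finset (Fin n), I.Nonempty →
      ¬∃ z : Fin n → ℂ, (∀ j ∈ I, z j ≠ 0) ∧ (∀ j ∉ I, z j = 0) ∧
        (∀ j ∈ I, fderiv ℂ f z (Pi.single j 1) = 0))
    (a b : ℕ) (hb : 1 ≤ b) (hab : b < a) :
    ∀ w : Fin n → ℂ, w ≠ 0 → f (phiab a b w) = 0 →
      0 < ∑ j : Fin n, ∑ k : Fin n,
            if j < k then Cjk (fun w => f (phiab a b w)) w j k else 0 := by
  intro w hw hzero
  have ha₀ : a ≠ 0 := by omega
  have hb₀ : b ≠ 0 := by omega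
  have hφw : phiab a b w ≠ 0 := fun h => hw <| funext fun j =>
    (phiab_apply_eq_zero_iff ha₀ j).1 (congrFun h j)
  obtain ⟨j, k, hjk, hne⟩ := exists_lt_mul_pullbackGradFactor_sub_ne_zero hp ha₀ hb₀
    (hf _) (fun r hr => hhom r hr _) hzero (exists_ne_zero_and_fderiv_single_ne_zero hcrit hφw)
  have hC (j k : Fin n) : Cjk (fun w => f (phiab a b w)) w j k = ((a : ℝ) ^ 2 - (b : ℝ) ^ 2) *
      ‖w j * w k * (pullbackGradFactor f a b w k - pullbackGradFactor f a b w j)‖ ^ 2 := by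
    simpa using Cjk_eq_of_wdz_of_wdzbar (wdz_comp_phiab hb₀ (hf _))
      (wdzbar_comp_phiab ha₀ (hf _)) j k
  have hK : 0 < (a : ℝ) ^ 2 - (b : ℝ) ^ 2 :=
    sub_pos.2 (pow_lt_pow_left₀ (by exact_mod_cast hab) (by positivity) two_ne_zero)
  have hterm (j k : Fin n) :
      0 ≤ if j < k then Cjk (fun w => f (phiab a b w)) w j k else 0 := by
    split_ifs
    · rw [hC]; positivity
    · rfl
  refine Finset.sum_pos' (fun j _ => Finset.sum_nonneg fun k _ => hterm j k)
    ⟨j, Finset.mem_univ j, Finset.sum_pos' (fun k _ => hterm j k) ⟨k, Finset.mem_univ k, ?_⟩⟩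
  rw [if_pos hjk, hC]
  have := norm_pos_iff.2 hne
  positivity

/-- If `f` is a holomorphic weighted homogeneous (polynomial) function whose
restriction to each coordinate subspace has no critical point on the corresponding
torus, then `g = f ∘ φ_{a,b}` (with `a > b ≥ 1`) is strictly holomorphic-like on
all of `ℂⁿ`: `C(w) = Σ_{j<k} C_{j,k}(w) > 0` at every nonzero point of `g⁻¹(0)`. -/
theorem weighted_homogeneous_pullback_strictly_holomorphic_like (n : ℕ)
    (f : (Fin n → ℂ) → ℂ) (hf : Differentiable ℂ f)
    (p : Fin n → ℕ) (hp : ∀ j, 0 < p j) (d : ℕ) (hd : 0 < d)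
    (hhom : ∀ r : ℝ, 0 < r → ∀ z : Fin n → ℂ,
      f (fun j => ((r ^ (p j) : ℝ) : ℂ) * z j) = ((r ^ d : ℝ) : ℂ) * f z)
    (hcrit : ∀ I : Finset (Fin n), I.Nonempty →
      ¬∃ z : Fin n → ℂ, (∀ j ∈ I, z j ≠ 0) ∧ (∀ j ∉ I, z j = 0) ∧
        (∀ j ∈ I, fderiv ℂ f z (Pi.single j 1) = 0))
    (a b : ℕ) (hb : 1 ≤ b) (hab : b < a) :
    ∀ w : Fin n → ℂ, w ≠ 0 → f (phiab a b w) = 0 →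
      0 < ∑ j : Fin n, ∑ k : Fin n,
            if j < k then Cjk (fun w => f (phiab a b w)) w j k else 0 :=
  weighted_homogeneous_pullback_strictly_holomorphic_like_general n f hf p hp d hhom hcrit a b hb
    hab
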